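/- arXiv:2112.14634 — 2 statements merged into one kernel-verified Lean document; each statement's English description precedes it below -/
import Mathlib

section
/- Let G be a finite group of odd order and let ρ be a representation of G on a finite-dimensional real vector space V that has no trivial components, i.e. the subspace of G-fixed vectors {v ∈ V | ρ(g)v = v for all g ∈ G} is zero. Then the dimension of V over ℝ is even. -/
/-!
The average of the character over `G` is the dimension of `V^G`, so `∑ g, χ g = 0`. Since `V`
is real, an invariant inner product makes `ρ g` orthogonal, hence `χ g⁻¹ = χ g`; and as `|G|` is
odd, `g ↦ g⁻¹` has no fixed point besides `1`. Pairing `g` with `g⁻¹` gives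
`dim V = χ 1 = -∑_{g ≠ 1} χ g ∈ 2 𝒪`, where `𝒪` is the ring of algebraic integers (each `χ g` is a
sum of roots of unity). So `dim V / 2` is a rational algebraic integer, i.e. an integer.
-/

open Matrix Polynomial

theorem Module.End.isIntegral_trace_of_pow_eq_one {L W : Type*} [Field L] [IsAlgClosed L]
    [AddCommGroup W] [Module L W] [FiniteDimensional L W] {f : Module.End L W} {N : ℕ}
    (hN : N ≠ 0) (hf : f ^ N = 1) : IsIntegral ℤ (LinearMap.trace L W f) := by
  rw [Module.End.trace_eq_sum_roots_charpoly_of_splits (IsAlgClosed.splits _)]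
  refine Subalgebra.multiset_sum_mem (integralClosure ℤ L) fun μ hμ => ?_
  have hμ : f.HasEigenvalue μ :=
    (f.hasEigenvalue_iff_isRoot_charpoly μ).mpr (mem_roots'.mp hμ).2
  have hμN : μ ^ N = 1 := by
    obtain ⟨v, hv⟩ := (hμ.pow N).exists_hasEigenvector
    rw [hf] at hv
    exact smul_left_injective L hv.2 (by simpa using hv.apply_eq_smul.symm)
  exact ⟨X ^ N - C 1, monic_X_pow_sub_C 1 hN, by simp [hμN]⟩

theorem Module.End.isIntegral_algebraMap_trace_of_pow_eq_one {K L V : Type*} [Field K]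
    [Field L] [IsAlgClosed L] [Algebra K L] [AddCommGroup V] [Module K V] [FiniteDimensional K V]
    {f : Module.End K V} {N : ℕ} (hN : N ≠ 0) (hf : f ^ N = 1) :
    IsIntegral ℤ (algebraMap K L (LinearMap.trace K V f)) := by
  rw [← LinearMap.trace_baseChange]
  refine isIntegral_trace_of_pow_eq_one hN ?_
  rw [← LinearMap.baseChange_pow, hf]
  exact LinearMap.baseChange_one _ _

theorem Representation.isIntegral_algebraMap_char {G K L V : Type*} [Group G] [Finite G]
    [Field K] [Field L] [IsAlgClosed L] [Algebra K L] [AddCommGroup V] [Module K V]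
    [FiniteDimensional K V] (ρ : Representation K G V) (g : G) :
    IsIntegral ℤ (algebraMap K L (ρ.character g)) :=
  Module.End.isIntegral_algebraMap_trace_of_pow_eq_one Nat.card_pos.ne'
    (by rw [← map_pow, pow_card_eq_one', map_one])

theorem Representation.sum_char_eq_zero_of_invariants_eq_bot {G k V : Type*} [Group G]
    [Fintype G] [Field k] [Invertible (Nat.card G : k)] [AddCommGroup V] [Module k V]
    [FiniteDimensional k V]
    (ρ : Representation k G V) (h : ρ.invariants = ⊥) : ∑ g, ρ.character g = 0 := by
  have := ρ.card_inv_mul_sum_char_eq_finrank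
  rw [h, finrank_bot, Nat.cast_zero] at this
  exact (mul_eq_zero.mp this).resolve_left (inv_ne_zero (Invertible.ne_zero _))

open scoped ComplexOrder in
theorem Matrix.trace_apply_inv_eq_star_trace {G 𝕜 n : Type*} [Group G] [Fintype G] [RCLike 𝕜]
    [Fintype n] [DecidableEq n] (M : G →* Matrix n n 𝕜) (g : G) :
    (M g⁻¹).trace = star (M g).trace := by
  classical
  set P := ∑ h, (M h)ᴴ * M h with hP_def
  have hP : P.PosDef := by
    rw [hP_def, ← Finset.add_sum_erase _ _ (Finset.mem_univ (1 : G)), map_one,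
      conjTranspose_one, one_mul]
    exact PosDef.one.add_posSemidef
      (posSemidef_sum _ fun h _ => posSemidef_conjTranspose_mul_self _)
  have hPinv : (M g)ᴴ * P * M g = P := by
    rw [Finset.mul_sum, Finset.sum_mul]
    refine Fintype.sum_bijective _ (Group.mulRight_bijective g) _ _ fun h => ?_
    simp only [map_mul, conjTranspose_mul, Matrix.mul_assoc]
  have hPdet : IsUnit P.det := hP.det_pos.ne'.isUnit
  calc (M g⁻¹).trace = (P⁻¹ * ((M g)ᴴ * P * M g) * M g⁻¹).trace := by
        rw [hPinv, nonsing_inv_mul P hPdet, Matrix.one_mul]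
    _ = (P⁻¹ * (M g)ᴴ * P).trace := by
        simp only [Matrix.mul_assoc, ← map_mul, mul_inv_cancel, map_one, Matrix.mul_one]
    _ = star (M g).trace := by
        rw [trace_conj' ((isUnit_iff_isUnit_det P).mpr hPdet), trace_conjTranspose]

theorem Representation.char_inv {G V : Type*} [Group G] [Fintype G] [AddCommGroup V]
    [Module ℝ V] [FiniteDimensional ℝ V] (ρ : Representation ℝ G V) (g : G) :
    ρ.character g⁻¹ = ρ.character g := by
  let b := Module.finBasis ℝ V
  simp only [character, LinearMap.trace_eq_matrix_trace ℝ b]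
  exact Matrix.trace_apply_inv_eq_star_trace ((LinearMap.toMatrixAlgEquiv b).toMonoidHom.comp ρ) g

theorem eq_one_of_inv_eq_self_of_odd_card {G : Type*} [Group G] [Fintype G]
    (hG : Odd (Fintype.card G)) {g : G} (hg : g⁻¹ = g) : g = 1 := by
  obtain ⟨k, hk⟩ := hG
  have hsq : g ^ 2 = 1 := by rw [sq]; nth_rw 1 [← hg]; exact inv_mul_cancel g
  simpa [hk, pow_succ, pow_mul, hsq] using pow_card_eq_one (x := g)

theorem sum_eq_apply_one_of_inv_invariant {G A : Type*} [Group G] [Fintype G]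
    (hG : Odd (Fintype.card G)) [AddCommMonoid A] (hA : ∀ a : A, a + a = 0) (f : G → A)
    (hf : ∀ g, f g⁻¹ = f g) : ∑ g, f g = f 1 := by
  classical
  rw [← Finset.add_sum_erase _ _ (Finset.mem_univ 1), Finset.sum_involution (fun g _ => g⁻¹)
    (fun g _ => by rw [hf, hA]) ?_ (by simp) (by simp), add_zero]
  exact fun g hg _ hinv => (Finset.mem_erase.mp hg).1 (eq_one_of_inv_eq_self_of_odd_card hG hinv)

theorem apply_one_mem_span_two_of_sum_eq_zero {G R : Type*} [Group G] [Fintype G]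
    (hG : Odd (Fintype.card G)) [CommRing R] {f : G → R} (hf : ∀ g, f g⁻¹ = f g)
    (hsum : ∑ g, f g = 0) : f 1 ∈ Ideal.span {(2 : R)} := by
  let I := Ideal.span {(2 : R)}
  have hI : ∀ a : R ⧸ I, a + a = 0 := fun a => by
    rw [← two_mul, ← map_ofNat (Ideal.Quotient.mk I) 2,
      Ideal.Quotient.eq_zero_iff_mem.mpr (Ideal.mem_span_singleton_self 2), zero_mul]
  rw [← Ideal.Quotient.eq_zero_iff_mem, ← sum_eq_apply_one_of_inv_invariant hG hI
    (fun g => Ideal.Quotient.mk I (f g)) (fun g => by rw [hf]), ← map_sum, hsum, map_zero]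

theorem even_of_natCast_eq_two_mul {L : Type*} [Field L] [CharZero L] {n : ℕ} {x : L}
    (hx : IsIntegral ℤ x) (h : (n : L) = 2 * x) : Even n := by
  have hq : algebraMap ℚ L (n / 2) = x := by
    rw [map_div₀, map_natCast, map_ofNat, h]; field_simp
  obtain ⟨k, hk⟩ := IsIntegrallyClosed.isIntegral_iff.mp
    ((isIntegral_algebraMap_iff (algebraMap ℚ L).injective).mp (hq ▸ hx))
  have hk' : (k : ℚ) = n / 2 := by simpa using hk
  have hnk : (n : ℚ) = k + k := by linarith
  exact (Int.even_coe_nat n).mp ⟨k, by exact_mod_cast hnk⟩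

/-- A real representation without trivial components of a finite group of odd
order has even dimension. -/
theorem odd_order_rep_no_trivial_component_even_dim
    {G : Type*} [Group G] [Fintype G] (hG : Odd (Fintype.card G))
    {V : Type*} [AddCommGroup V] [Module ℝ V] [FiniteDimensional ℝ V]
    (ρ : Representation ℝ G V)
    (hno : ∀ v : V, (∀ g : G, ρ g v = v) → v = 0) :
    Even (Module.finrank ℝ V) := by
  have : Invertible (Nat.card G : ℝ) := invertibleOfNonzero (Nat.cast_ne_zero.mpr Nat.card_pos.ne')
  let O := integralClosure ℤ ℂ
  let χ : G → O := fun g => ⟨algebraMap ℝ ℂ (ρ.character g), ρ.isIntegral_algebraMap_char g⟩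
  have hχsum : ∑ g, χ g = 0 := Subtype.ext <| by
    simpa [χ] using congrArg (algebraMap ℝ ℂ)
      (ρ.sum_char_eq_zero_of_invariants_eq_bot ((Submodule.eq_bot_iff _).mpr hno))
  obtain ⟨r, hr⟩ := Ideal.mem_span_singleton.mp <|
    apply_one_mem_span_two_of_sum_eq_zero hG (f := χ) (fun g => by simp only [χ, ρ.char_inv])
      hχsum
  have hdim := congrArg O.val hr
  rw [map_mul, map_ofNat] at hdim
  exact even_of_natCast_eq_two_mul r.2 (by simpa [χ] using hdim)
end

section
/- The group defined by the presentation with two generators x, y and relators x², y³, (xy)⁴, (xy)⁵ is the trivial group. -/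
private def myRels : Set (FreeGroup (Fin 2)) :=
  {(FreeGroup.of 0) ^ 2, (FreeGroup.of 1) ^ 3,
    (FreeGroup.of 0 * FreeGroup.of 1) ^ 4,
    (FreeGroup.of 0 * FreeGroup.of 1) ^ 5}

private lemma aux_trivial (g : PresentedGroup myRels) : g = 1 := by
  have key : ∀ r ∈ myRels, (QuotientGroup.mk r : PresentedGroup myRels) = 1 := fun r hr =>
    (QuotientGroup.eq_one_iff r).mpr (Subgroup.subset_normalClosure hr)
  have ha2 : (PresentedGroup.of 0 : PresentedGroup myRels) ^ 2 = 1 := key _ (Or.inl rfl)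
  have hb3 : (PresentedGroup.of 1 : PresentedGroup myRels) ^ 3 = 1 := key _ (Or.inr (Or.inl rfl))
  have hab4 : ((PresentedGroup.of 0 : PresentedGroup myRels) * PresentedGroup.of 1) ^ 4 = 1 :=
    key _ (Or.inr (Or.inr (Or.inl rfl)))
  have hab5 : ((PresentedGroup.of 0 : PresentedGroup myRels) * PresentedGroup.of 1) ^ 5 = 1 :=
    key _ (Or.inr (Or.inr (Or.inr rfl)))
  set a : PresentedGroup myRels := PresentedGroup.of 0 with ha
  set b : PresentedGroup myRels := PresentedGroup.of 1 with hb
  have hab : a * b = 1 := by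
    have h5 : (a * b) ^ 5 = (a * b) ^ 4 * (a * b) := by rw [pow_succ]
    rw [hab5, hab4, one_mul] at h5
    exact h5.symm
  have hbinv : b = a⁻¹ := (inv_eq_of_mul_eq_one_right hab).symm
  have hb2 : b ^ 2 = 1 := by rw [hbinv, inv_pow, ha2, inv_one]
  have hb1 : b = 1 := by
    have h3 : b ^ 3 = b ^ 2 * b := by rw [pow_succ]
    rw [hb3, hb2, one_mul] at h3
    exact h3.symm
  have ha1 : a = 1 := by
    have := hb1
    rw [hbinv, inv_eq_one] at this
    exact this
  have hmem : g ∈ Subgroup.closure (Set.range (PresentedGroup.of (rels := myRels))) := by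
    rw [PresentedGroup.closure_range_of]; trivial
  have hsub : Set.range (PresentedGroup.of (rels := myRels)) ⊆
      ((⊥ : Subgroup (PresentedGroup myRels)) : Set (PresentedGroup myRels)) := by
    rintro _ ⟨x, rfl⟩
    fin_cases x
    · exact ha1
    · exact hb1
  have := (Subgroup.closure_le ⊥).mpr hsub hmem
  simpa [Subgroup.mem_bot] using this

/-- The group `⟨x, y ∣ x², y³, (xy)⁴, (xy)⁵⟩` is trivial. -/
theorem presentedGroup_x2_y3_xy4_xy5_trivial
    (g : PresentedGroup ({(FreeGroup.of 0) ^ 2, (FreeGroup.of 1) ^ 3,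
        (FreeGroup.of 0 * FreeGroup.of 1) ^ 4,
        (FreeGroup.of 0 * FreeGroup.of 1) ^ 5} : Set (FreeGroup (Fin 2)))) :
    g = 1 := aux_trivial g
end
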